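/- arXiv:2306.11616 — 3 statements merged into one kernel-verified Lean document; each statement's English description precedes it below -/
import Mathlib

section
/- Let A ∈ ℝ^{m×m} be generic with distinct eigenvalues of positive real part, let x ≠ 0, write e^{-At}x = Σ_{j∈J_x} e^{-λ_j t} c_j(x) v_j with c_j(x) ≠ 0 for j ∈ J_x, set ρ_x := min{Re λ_j : j ∈ J_x} and R_x := {j ∈ J_x : Re λ_j = ρ_x}. Then 0 < liminf_{t→∞} |e^{ρ_x t} e^{-At}x| ≤ limsup_{t→∞} |e^{ρ_x t} e^{-At}x| ≤ Σ_{j∈R_x} |c_j(x)| < ∞. -/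
open Filter Topology

/-- View a complex vector as an element of complex Euclidean space. -/
noncomputable def eucC {m : ℕ} (v : Fin m → ℂ) : EuclideanSpace ℂ (Fin m) := WithLp.toLp 2 v

lemma exp_mulVec_eigen {m : ℕ} (N : Matrix (Fin m) (Fin m) ℂ) (w : Fin m → ℂ) (μ : ℂ)
    (h : N.mulVec w = μ • w) :
    (NormedSpace.exp N).mulVec w = Complex.exp μ • w := by
  have hpow : ∀ n : ℕ, (N ^ n).mulVec w = μ ^ n • w := by
    intro n
    induction n with
    | zero => simp [Matrix.one_mulVec]
    | succ n ih =>
      rw [pow_succ', ← Matrix.mulVec_mulVec, ih, Matrix.mulVec_smul, h, smul_smul, mul_comm,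
        ← pow_succ']
  have hsum : Summable fun n : ℕ => (n.factorial⁻¹ : ℂ) • N ^ n := by
    letI : SeminormedRing (Matrix (Fin m) (Fin m) ℂ) := Matrix.linftyOpSemiNormedRing
    letI : NormedRing (Matrix (Fin m) (Fin m) ℂ) := Matrix.linftyOpNormedRing
    letI : NormedAlgebra ℂ (Matrix (Fin m) (Fin m) ℂ) := Matrix.linftyOpNormedAlgebra
    exact NormedSpace.expSeries_summable' N
  let L : Matrix (Fin m) (Fin m) ℂ →ₗ[ℂ] (Fin m → ℂ) :=
    { toFun := fun M => M.mulVec w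
      map_add' := fun a b => Matrix.add_mulVec a b w
      map_smul' := fun r a => Matrix.smul_mulVec r a w }
  have hμsum : Summable fun n : ℕ => (n.factorial⁻¹ : ℂ) * μ ^ n := by
    simpa using NormedSpace.expSeries_summable' (𝕂 := ℂ) μ
  calc (NormedSpace.exp N).mulVec w
      = L.toContinuousLinearMap (∑' n : ℕ, (n.factorial⁻¹ : ℂ) • N ^ n) := by
        rw [NormedSpace.exp_eq_tsum ℂ]; rfl
    _ = ∑' n : ℕ, (n.factorial⁻¹ : ℂ) • (N ^ n).mulVec w := by
        rw [L.toContinuousLinearMap.map_tsum hsum]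
        simp [L]
    _ = ∑' n : ℕ, ((n.factorial⁻¹ : ℂ) * μ ^ n) • w := by
        simp_rw [hpow, smul_smul]
    _ = (∑' n : ℕ, (n.factorial⁻¹ : ℂ) * μ ^ n) • w := hμsum.tsum_smul_const w
    _ = Complex.exp μ • w := by
        rw [Complex.exp_eq_exp_ℂ, NormedSpace.exp_eq_tsum ℂ]
        simp

/-- Let `A ∈ ℝ^{m×m}` be generic: diagonalizable over `ℂ` with `m` pairwise distinct
eigenvalues `λ j` of positive real part and unit eigenvectors `v j` forming a basis.
Let `x ≠ 0` with expansion `x = ∑ j, c j • v j`, let `ρ = min {Re (λ j) : c j ≠ 0}` and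
`R = {j : c j ≠ 0 ∧ Re (λ j) = ρ}`. Then
`0 < liminf_{t→∞} |e^{ρ t} e^{-At} x| ≤ limsup_{t→∞} |e^{ρ t} e^{-At} x| ≤ ∑_{j∈R} |c j|`. -/
theorem stmt_5 {m : ℕ} (A : Matrix (Fin m) (Fin m) ℝ) (lam : Fin m → ℂ)
    (v : Fin m → (Fin m → ℂ)) (c : Fin m → ℂ) (x : Fin m → ℝ) (ρ : ℝ)
    (hdist : Function.Injective lam)
    (hpos : ∀ j, 0 < (lam j).re)
    (heig : ∀ j, (A.map (Complex.ofReal ·)).mulVec (v j) = lam j • v j)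
    (hunit : ∀ j, ‖eucC (v j)‖ = 1)
    (hbasis : LinearIndependent ℂ v)
    (hx : x ≠ 0)
    (hexp : (fun i => (x i : ℂ)) = ∑ j, c j • v j)
    (hρ : IsLeast {r : ℝ | ∃ j, c j ≠ 0 ∧ r = (lam j).re} ρ) :
    0 < liminf (fun t : ℝ =>
          Real.exp (ρ * t) *
            ‖eucC ((NormedSpace.exp (-(t • A.map (Complex.ofReal ·)))).mulVec
              (fun i => (x i : ℂ)))‖) atTop ∧
    liminf (fun t : ℝ =>
          Real.exp (ρ * t) *
            ‖eucC ((NormedSpace.exp (-(t • A.map (Complex.ofReal ·)))).mulVec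
              (fun i => (x i : ℂ)))‖) atTop ≤
      limsup (fun t : ℝ =>
          Real.exp (ρ * t) *
            ‖eucC ((NormedSpace.exp (-(t • A.map (Complex.ofReal ·)))).mulVec
              (fun i => (x i : ℂ)))‖) atTop ∧
    limsup (fun t : ℝ =>
          Real.exp (ρ * t) *
            ‖eucC ((NormedSpace.exp (-(t • A.map (Complex.ofReal ·)))).mulVec
              (fun i => (x i : ℂ)))‖) atTop ≤
      ∑ j ∈ Finset.univ.filter (fun j => c j ≠ 0 ∧ (lam j).re = ρ), ‖c j‖ := by
  set M : Matrix (Fin m) (Fin m) ℂ := A.map (Complex.ofReal ·) with hM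
  set S : Finset (Fin m) := Finset.univ.filter (fun j => c j ≠ 0 ∧ (lam j).re = ρ) with hS
  set C : ℝ := ∑ j ∈ S, ‖c j‖ with hC
  set a : ℝ → Fin m → ℂ := fun t j => Complex.exp (((ρ : ℂ) - lam j) * (t : ℂ)) with ha
  set G : ℝ → EuclideanSpace ℂ (Fin m) :=
    fun t => ∑ j ∈ S, (a t j * c j) • eucC (v j) with hG
  set H : ℝ → EuclideanSpace ℂ (Fin m) :=
    fun t => ∑ j ∈ Finset.univ.filter (fun j => ¬(c j ≠ 0 ∧ (lam j).re = ρ)),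
      (a t j * c j) • eucC (v j) with hH
  -- the exponential applied to x
  have key : ∀ t : ℝ, (NormedSpace.exp (-(t • M))).mulVec (fun i => (x i : ℂ))
      = ∑ j, (c j * Complex.exp (-(t : ℂ) * lam j)) • v j := by
    intro t
    have heig' : ∀ j, (-(t • M)).mulVec (v j) = (-(t : ℂ) * lam j) • v j := by
      intro j
      have h1 : -(t • M) = (-(t : ℂ)) • M := by
        ext i k
        simp [Matrix.smul_apply, Complex.real_smul]
      rw [h1, Matrix.smul_mulVec, heig j, smul_smul]
    have hsum : ∀ (B : Matrix (Fin m) (Fin m) ℂ),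
        B.mulVec (∑ j, c j • v j) = ∑ j, c j • B.mulVec (v j) := by
      intro B
      simp [Matrix.mulVec_sum, Matrix.mulVec_smul]
    rw [hexp, hsum]
    refine Finset.sum_congr rfl fun j _ => ?_
    rw [exp_mulVec_eigen _ _ _ (heig' j), smul_smul]
  -- norm-1 coefficients on S
  have ha_re : ∀ (t : ℝ) (j : Fin m), ‖a t j‖ = Real.exp ((ρ - (lam j).re) * t) := by
    intro t j
    rw [ha]
    rw [Complex.norm_exp]
    congr 1
    simp [Complex.mul_re, Complex.sub_re, Complex.sub_im]
  have ha_one : ∀ (t : ℝ), ∀ j ∈ S, ‖a t j‖ = 1 := by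
    intro t j hj
    have hre : (lam j).re = ρ := ((Finset.mem_filter.mp hj).2).2
    rw [ha_re, hre]
    simp
  -- the key pointwise formula
  have keyF : ∀ t : ℝ,
      Real.exp (ρ * t) * ‖eucC ((NormedSpace.exp (-(t • M))).mulVec (fun i => (x i : ℂ)))‖
        = ‖G t + H t‖ := by
    intro t
    rw [key t]
    have e1 : eucC (∑ j, (c j * Complex.exp (-(t : ℂ) * lam j)) • v j)
        = ∑ j, (c j * Complex.exp (-(t : ℂ) * lam j)) • eucC (v j) := by
        simp only [eucC, WithLp.toLp_sum, WithLp.toLp_smul]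
    rw [e1]
    have e2 : G t + H t = ∑ j, (a t j * c j) • eucC (v j) :=
      Finset.sum_filter_add_sum_filter_not Finset.univ _ _
    rw [e2]
    calc Real.exp (ρ * t) * ‖∑ j, (c j * Complex.exp (-(t : ℂ) * lam j)) • eucC (v j)‖
        = ‖Complex.exp (((ρ * t : ℝ) : ℂ)) • ∑ j, (c j * Complex.exp (-(t : ℂ) * lam j)) • eucC (v j)‖ := by
          rw [norm_smul, Complex.norm_exp, Complex.ofReal_re]
      _ = ‖∑ j, (a t j * c j) • eucC (v j)‖ := by
          rw [Finset.smul_sum]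
          congr 1
          refine Finset.sum_congr rfl fun j _ => ?_
          rw [smul_smul]
          congr 1
          have hexps : ((ρ * t : ℝ) : ℂ) + (-(t : ℂ) * lam j) = ((ρ : ℂ) - lam j) * (t : ℂ) := by
            push_cast; ring
          rw [ha, mul_comm (c j) _, ← mul_assoc, ← Complex.exp_add, hexps]
  -- H tends to zero
  have hH0 : Tendsto H atTop (𝓝 0) := by
    rw [hH]
    have : Tendsto (fun t : ℝ => ∑ j ∈ Finset.univ.filter (fun j => ¬(c j ≠ 0 ∧ (lam j).re = ρ)),
        (a t j * c j) • eucC (v j)) atTop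
        (𝓝 (∑ j ∈ Finset.univ.filter (fun j => ¬(c j ≠ 0 ∧ (lam j).re = ρ)),
          (0 : EuclideanSpace ℂ (Fin m)))) := by
      refine tendsto_finset_sum _ fun j hj => ?_
      by_cases hc : c j = 0
      · simpa [hc] using tendsto_const_nhds
      · have hne : (lam j).re ≠ ρ := fun h => (Finset.mem_filter.mp hj).2 ⟨hc, h⟩
        have hle : ρ ≤ (lam j).re := hρ.2 ⟨j, hc, rfl⟩
        have hlt : ρ < (lam j).re := lt_of_le_of_ne hle (Ne.symm hne)
        have hA : Tendsto (fun t : ℝ => a t j) atTop (𝓝 0) := by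
          rw [tendsto_zero_iff_norm_tendsto_zero]
          simp_rw [ha_re]
          have h2 : Tendsto (fun t : ℝ => (ρ - (lam j).re) * t) atTop atBot := by
            have h3 : Tendsto (fun t : ℝ => ((lam j).re - ρ) * t) atTop atTop :=
              Tendsto.const_mul_atTop (by linarith) tendsto_id
            have h4 := tendsto_neg_atTop_atBot.comp h3
            refine h4.congr fun t => by simp; ring
          exact Real.tendsto_exp_atBot.comp h2
        have := hA.smul_const ((c j) • eucC (v j))
        simpa [mul_smul] using this
    simpa using this
  have hHn0 : Tendsto (fun t => ‖H t‖) atTop (𝓝 0) := by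
    simpa using hH0.norm
  -- compactness: lower bound for G
  obtain ⟨j₀, hcj₀, hrej₀⟩ := hρ.1
  have hj₀S : j₀ ∈ S := Finset.mem_filter.mpr ⟨Finset.mem_univ _, hcj₀, hrej₀.symm⟩
  set K : Set (Fin m → ℂ) := Set.univ.pi (fun _ => Metric.sphere (0 : ℂ) 1) with hK
  have hKc : IsCompact K := isCompact_univ_pi (fun _ => isCompact_sphere 0 1)
  have hKne : K.Nonempty := ⟨fun _ => 1, fun j _ => by simp⟩
  set φ : (Fin m → ℂ) → ℝ := fun b => ‖∑ j ∈ S, (b j * c j) • eucC (v j)‖ with hφ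
  have hφc : Continuous φ := by
    refine continuous_norm.comp (continuous_finset_sum _ fun j _ => ?_)
    exact ((continuous_apply j).mul continuous_const).smul continuous_const
  obtain ⟨a₀, ha₀, hmin⟩ := hKc.exists_isMinOn hKne hφc.continuousOn
  have hδpos : 0 < φ a₀ := by
    have hnn : 0 ≤ φ a₀ := by simp only [hφ]; exact norm_nonneg _
    rcases hnn.lt_or_eq with h | h
    · exact h
    · exfalso
      simp only [hφ] at h
      have hz : ∑ j ∈ S, (a₀ j * c j) • eucC (v j) = 0 := norm_eq_zero.mp h.symm
      have hz' : ∑ j ∈ S, (a₀ j * c j) • v j = (0 : Fin m → ℂ) := by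
        simpa only [eucC, WithLp.ofLp_sum, WithLp.ofLp_smul, WithLp.ofLp_toLp, WithLp.ofLp_zero] using
          congrArg WithLp.ofLp hz
      have hall : ∀ j, (if j ∈ S then a₀ j * c j else 0) = 0 := by
        apply Fintype.linearIndependent_iff.mp hbasis
        rw [← hz']
        simp only [ite_smul, zero_smul]
        rw [Finset.sum_ite_mem, Finset.univ_inter]
      have h0 := hall j₀
      rw [if_pos hj₀S] at h0
      have ha₀1 : ‖a₀ j₀‖ = 1 := by
        have := ha₀ j₀ (Set.mem_univ _)
        simpa using this
      rcases mul_eq_zero.mp h0 with h' | h'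
      · rw [h'] at ha₀1; simp at ha₀1
      · exact hcj₀ h'
  have hGlb : ∀ t : ℝ, φ a₀ ≤ ‖G t‖ := by
    intro t
    have hmem : (fun j => if j ∈ S then a t j else 1) ∈ K := by
      intro j _
      simp only [Metric.mem_sphere, dist_zero_right]
      split
      · next hj => exact ha_one t j hj
      · simp
    have h1 : φ a₀ ≤ φ (fun j => if j ∈ S then a t j else 1) := hmin hmem
    have h2 : φ (fun j => if j ∈ S then a t j else 1) = ‖G t‖ := by
      have hcg : ∑ j ∈ S, ((if j ∈ S then a t j else 1) * c j) • eucC (v j)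
          = ∑ j ∈ S, (a t j * c j) • eucC (v j) :=
        Finset.sum_congr rfl fun j hj => by rw [if_pos hj]
      simp only [hφ, hG]
      rw [hcg]
    rwa [h2] at h1
  have hGub : ∀ t : ℝ, ‖G t‖ ≤ C := by
    intro t
    rw [hG, hC]
    refine (norm_sum_le _ _).trans (Finset.sum_le_sum fun j hj => ?_)
    rw [norm_smul, norm_mul, ha_one t j hj, hunit j]
    simp
  -- pointwise bounds for f
  have hflb : ∀ t : ℝ, φ a₀ - ‖H t‖ ≤ ‖G t + H t‖ := by
    intro t
    have h1 : ‖G t‖ ≤ ‖G t + H t‖ + ‖H t‖ := by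
      calc ‖G t‖ = ‖(G t + H t) - H t‖ := by rw [add_sub_cancel_right]
        _ ≤ ‖G t + H t‖ + ‖H t‖ := norm_sub_le _ _
    linarith [hGlb t]
  have hfub : ∀ t : ℝ, ‖G t + H t‖ ≤ C + ‖H t‖ := by
    intro t
    calc ‖G t + H t‖ ≤ ‖G t‖ + ‖H t‖ := norm_add_le _ _
      _ ≤ C + ‖H t‖ := by linarith [hGub t]
  -- rewrite goal
  have hfeq : (fun t : ℝ =>
      Real.exp (ρ * t) * ‖eucC ((NormedSpace.exp (-(t • M))).mulVec (fun i => (x i : ℂ)))‖)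
      = fun t => ‖G t + H t‖ := funext keyF
  rw [hfeq]
  -- eventual bounds
  have hHev : ∀ᶠ t in atTop, ‖H t‖ ≤ φ a₀ / 2 :=
    hHn0.eventually (eventually_le_nhds (half_pos hδpos))
  have hubev : ∀ᶠ t in atTop, ‖G t + H t‖ ≤ C + φ a₀ / 2 :=
    hHev.mono fun t ht => (hfub t).trans (by linarith)
  have hlbev : ∀ᶠ t in atTop, φ a₀ / 2 ≤ ‖G t + H t‖ :=
    hHev.mono fun t ht => by have := hflb t; linarith
  have hbdd_le : IsBoundedUnder (· ≤ ·) atTop (fun t => ‖G t + H t‖) :=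
    isBoundedUnder_of_eventually_le hubev
  have hbdd_ge : IsBoundedUnder (· ≥ ·) atTop (fun t => ‖G t + H t‖) :=
    isBoundedUnder_of_eventually_ge (Eventually.of_forall fun t => norm_nonneg _)
  have hcob_le : IsCoboundedUnder (· ≤ ·) atTop (fun t => ‖G t + H t‖) :=
    hbdd_ge.isCoboundedUnder_le
  have hcob_ge : IsCoboundedUnder (· ≥ ·) atTop (fun t => ‖G t + H t‖) :=
    hbdd_le.isCoboundedUnder_ge
  refine ⟨?_, ?_, ?_⟩
  · exact lt_of_lt_of_le (half_pos hδpos) (le_liminf_of_le hcob_ge hlbev)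
  · exact liminf_le_limsup hbdd_le hbdd_ge
  · have hHtend : Tendsto (fun t => C + ‖H t‖) atTop (𝓝 C) := by
      simpa using tendsto_const_nhds.add hHn0
    calc limsup (fun t => ‖G t + H t‖) atTop
        ≤ limsup (fun t => C + ‖H t‖) atTop :=
          limsup_le_limsup (Eventually.of_forall hfub) hcob_le hHtend.isBoundedUnder_le
      _ = C := hHtend.limsup_eq
end

section
/- Let A ∈ ℝ^{m×m} be normal with eigenvalues λ₁,…,λ_m all having positive real part, and Σ_t = (A+A*)^{-1}(I − e^{-t(A+A*)}), Σ_∞ = (A+A*)^{-1}. Then Tr(Σ_t + Σ_∞ − 2(Σ_∞^{1/2} Σ_t Σ_∞^{1/2})^{1/2}) = Σ_{j=1}^m (1/(2 Re λ_j)) · e^{-4t Re λ_j} / (√(1 − e^{-2t Re λ_j}) + 1)² for all t > 0. -/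
open Matrix Polynomial

lemma charpoly_conj_of {n R : Type*} [Fintype n] [DecidableEq n] [CommRing R]
    {P W : Matrix n n R} (h1 : P * W = 1) (M : Matrix n n R) :
    (P * M * W).charpoly = M.charpoly := by
  have hkey : charmatrix (P * M * W) = (P.map C) * charmatrix M * (W.map C) := by
    rw [charmatrix, charmatrix, RingHom.mapMatrix_apply, RingHom.mapMatrix_apply]
    rw [mul_sub, sub_mul]
    congr 1
    · rw [← ((scalar_commute (X : R[X]) (Commute.all X)) (P.map C)).eq, mul_assoc,
        ← Matrix.map_mul, h1, Matrix.map_one _ (map_zero C) (map_one C), mul_one]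
    · rw [Matrix.map_mul, Matrix.map_mul]
  rw [Matrix.charpoly, Matrix.charpoly, hkey, det_mul, det_mul,
    mul_comm ((P.map C).det), mul_assoc, ← det_mul, ← Matrix.map_mul, h1,
    Matrix.map_one _ (map_zero C) (map_one C), det_one, mul_one]

lemma charpoly_diagonal' {n R : Type*} [Fintype n] [DecidableEq n] [LinearOrder n] [CommRing R]
    (d : n → R) : (diagonal d).charpoly = ∏ i, (X - C (d i)) := by
  rw [Matrix.charpoly_of_upperTriangular _ (Matrix.blockTriangular_diagonal d)]
  simp

lemma multiset_of_prod_X_sub_C {R : Type*} [CommRing R] [IsDomain R] {s u : Multiset R}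
    (h : (s.map fun a => X - C a).prod = (u.map fun a => X - C a).prod) : s = u := by
  rw [← roots_multiset_prod_X_sub_C s, ← roots_multiset_prod_X_sub_C u, h]

lemma scalar_id {μ s : ℝ} (hs0 : 0 < s) (hs1 : s < 1) :
    (1 - s) * μ⁻¹ + μ⁻¹ - 2 * (Real.sqrt (1 - s) * μ⁻¹) =
    1 / μ * (s ^ 2 / (Real.sqrt (1 - s) + 1) ^ 2) := by
  have h1s : (0:ℝ) ≤ 1 - s := by linarith
  set r := Real.sqrt (1 - s) with hr
  have hr2 : r ^ 2 = 1 - s := Real.sq_sqrt h1s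
  have hrnn : 0 ≤ r := Real.sqrt_nonneg _
  have hrpos : 0 < r + 1 := by linarith
  have key : (1 - s) + 1 - 2 * r = s ^ 2 / (r + 1) ^ 2 := by
    rw [eq_div_iff (by positivity)]
    nlinarith [hr2]
  have step : (1 - s) * μ⁻¹ + μ⁻¹ - 2 * (r * μ⁻¹) = ((1 - s) + 1 - 2 * r) * μ⁻¹ := by ring
  rw [step, key]; ring

lemma toEuclideanLin_mul {m : ℕ} (M N : Matrix (Fin m) (Fin m) ℂ) :
    Matrix.toEuclideanLin (M * N) = Matrix.toEuclideanLin M * Matrix.toEuclideanLin N := by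
  ext x
  simp [Matrix.toEuclideanLin_apply, Module.End.mul_apply, ← Matrix.mulVec_mulVec]

lemma normal_charpoly_exists {m : ℕ} (B : Matrix (Fin m) (Fin m) ℂ)
    (hn : B * Bᴴ = Bᴴ * B) :
    ∃ d : Fin m → ℂ, B.charpoly = ∏ j, (X - C (d j)) ∧
      (B + Bᴴ).charpoly = ∏ j, (X - C ((2 * (d j).re : ℝ) : ℂ)) := by
  classical
  set Hm := B + Bᴴ with hHmdef
  set Jm := (-Complex.I) • (B - Bᴴ) with hJmdef
  have hHm : Hm.IsHermitian := by
    simp [Matrix.IsHermitian, hHmdef, conjTranspose_add, add_comm]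
  have hJm : Jm.IsHermitian := by
    rw [Matrix.IsHermitian, hJmdef, conjTranspose_smul, conjTranspose_sub,
      conjTranspose_conjTranspose, show star (-Complex.I) = Complex.I by simp,
      smul_sub, smul_sub, neg_smul, neg_smul]
    abel
  have hHs : (Matrix.toEuclideanLin Hm).IsSymmetric :=
    Matrix.isHermitian_iff_isSymmetric.mp hHm
  have hJs : (Matrix.toEuclideanLin Jm).IsSymmetric :=
    Matrix.isHermitian_iff_isSymmetric.mp hJm
  have hmm : Hm * Jm = Jm * Hm := by
    simp only [hHmdef, hJmdef, Matrix.mul_smul, Matrix.smul_mul]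
    congr 1
    simp only [add_mul, mul_add, sub_mul, mul_sub, hn]
    abel
  have hcomm : Commute (Matrix.toEuclideanLin Hm) (Matrix.toEuclideanLin Jm) := by
    unfold Commute SemiconjBy
    rw [← toEuclideanLin_mul, ← toEuclideanLin_mul, hmm]
  have hInt := hHs.directSum_isInternal_of_commute hJs hcomm
  set W : ℂ × ℂ → Submodule ℂ (EuclideanSpace ℂ (Fin m)) :=
    fun p => Module.End.eigenspace (Matrix.toEuclideanLin Hm) p.2 ⊓
      Module.End.eigenspace (Matrix.toEuclideanLin Jm) p.1 with hWdef
  let bW : ∀ p, Module.Basis (Fin (Module.finrank ℂ (W p))) ℂ (W p) := fun p => Module.finBasis ℂ (W p)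
  let b := hInt.collectedBasis bW
  haveI : Fintype ((p : ℂ × ℂ) × Fin (Module.finrank ℂ (W p))) :=
    FiniteDimensional.fintypeBasisIndex b
  have hcard : Fintype.card ((p : ℂ × ℂ) × Fin (Module.finrank ℂ (W p))) = m := by
    rw [← Module.finrank_eq_card_basis b, finrank_euclideanSpace, Fintype.card_fin]
  let e := Fintype.equivFinOfCardEq hcard
  let b' := b.reindex e
  set ν : Fin m → ℂ := fun j => ((e.symm j).1).2 with hν
  set μ : Fin m → ℂ := fun j => ((e.symm j).1).1 with hμ
  have hmem : ∀ j : Fin m, (b' j : EuclideanSpace ℂ (Fin m)) ∈ W (e.symm j).1 := by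
    intro j
    rw [Module.Basis.reindex_apply]
    exact hInt.collectedBasis_mem bW (e.symm j)
  have hHb : ∀ j, Matrix.toEuclideanLin Hm (b' j) = ν j • b' j := fun j =>
    Module.End.mem_eigenspace_iff.mp (hmem j).1
  have hJb : ∀ j, Matrix.toEuclideanLin Jm (b' j) = μ j • b' j := fun j =>
    Module.End.mem_eigenspace_iff.mp (hmem j).2
  have hνreal : ∀ j, (starRingEnd ℂ) (ν j) = ν j := by
    intro j
    exact hHs.conj_eigenvalue_eq_self
      (Module.End.hasEigenvalue_of_hasEigenvector ⟨(hmem j).1, b'.ne_zero j⟩)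
  have hμreal : ∀ j, (starRingEnd ℂ) (μ j) = μ j := by
    intro j
    exact hJs.conj_eigenvalue_eq_self
      (Module.End.hasEigenvalue_of_hasEigenvector ⟨(hmem j).2, b'.ne_zero j⟩)
  set d : Fin m → ℂ := fun j => (ν j + Complex.I * μ j) / 2 with hd
  have hBdecomp : B = (2⁻¹ : ℂ) • (Hm + Complex.I • Jm) := by
    rw [hHmdef, hJmdef, smul_smul, show Complex.I * -Complex.I = 1 by
      simp [Complex.I_mul_I], one_smul]
    rw [smul_add, smul_sub]
    module
  have hBb : ∀ j, Matrix.toEuclideanLin B (b' j) = d j • b' j := by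
    intro j
    rw [hBdecomp]
    simp only [_root_.map_smul, map_add, LinearMap.smul_apply, LinearMap.add_apply]
    rw [hHb j, hJb j, smul_smul Complex.I, ← add_smul, smul_smul]
    congr 1
    rw [hd]
    ring
  have hdiag : ∀ (M : Matrix (Fin m) (Fin m) ℂ) (c : Fin m → ℂ),
      (∀ j, Matrix.toEuclideanLin M (b' j) = c j • b' j) →
      M.charpoly = ∏ j, (X - C (c j)) := by
    intro M c hc
    have h1 : LinearMap.toMatrix b' b' (Matrix.toEuclideanLin M) = diagonal c := by
      ext i j
      rw [LinearMap.toMatrix_apply, hc j, _root_.map_smul, Module.Basis.repr_self]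
      by_cases h : i = j
      · subst h; simp
      · simp [Finsupp.single_apply, diagonal_apply, h, Ne.symm h]
    have h2 : M.charpoly = (Matrix.toEuclideanLin M).charpoly := by
      rw [Matrix.toEuclideanLin_eq_toLin,
        ← LinearMap.charpoly_toMatrix (Matrix.toLin (PiLp.basisFun 2 ℂ (Fin m))
          (PiLp.basisFun 2 ℂ (Fin m)) M) (PiLp.basisFun 2 ℂ (Fin m)),
        LinearMap.toMatrix_toLin]
    rw [h2, ← LinearMap.charpoly_toMatrix (Matrix.toEuclideanLin M) b', h1,
      charpoly_diagonal']
  refine ⟨d, hdiag B d hBb, ?_⟩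
  have h2re : ∀ j, ((2 * (d j).re : ℝ) : ℂ) = ν j := by
    intro j
    rw [← Complex.add_conj, hd]
    simp only [map_div₀, map_add, _root_.map_mul, Complex.conj_I, hνreal, hμreal, map_ofNat]
    ring
  rw [hdiag Hm ν hHb]
  exact Finset.prod_congr rfl fun j _ => by rw [h2re j]

lemma multiset_of_finset_prod {R : Type*} [CommRing R] [IsDomain R] {ι : Type*} [Fintype ι]
    {f g : ι → R} (h : ∏ j, (X - C (f j)) = ∏ j, (X - C (g j))) :
    Multiset.map f Finset.univ.val = Multiset.map g Finset.univ.val := by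
  apply multiset_of_prod_X_sub_C
  rw [Multiset.map_map, Multiset.map_map]
  rw [show ((fun a => X - C a) ∘ f) = fun j => X - C (f j) from rfl,
    show ((fun a => X - C a) ∘ g) = fun j => X - C (g j) from rfl,
    ← Finset.prod_eq_multiset_prod, ← Finset.prod_eq_multiset_prod]
  exact h


section
open scoped MatrixOrder Matrix.Norms.L2Operator
lemma psd_eq_of_sq_eq_sq {n : Type*} [Fintype n] [DecidableEq n] {A B : Matrix n n ℝ}
    (hA : A.PosSemidef) (hB : B.PosSemidef) (h : A ^ 2 = B ^ 2) : A = B := by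
  have hA2 : 0 ≤ A ^ 2 := by
    have := posSemidef_conjTranspose_mul_self A; rw [hA.1.eq, ← sq] at this; exact this.nonneg
  have hB2 : 0 ≤ B ^ 2 := by
    have := posSemidef_conjTranspose_mul_self B; rw [hB.1.eq, ← sq] at this; exact this.nonneg
  rw [← (CFC.sqrt_eq_iff (A ^ 2) A hA2 hA.nonneg).mpr (sq A).symm,
    ← (CFC.sqrt_eq_iff (B ^ 2) B hB2 hB.nonneg).mpr (sq B).symm, h]
end

/-- Let `A ∈ ℝ^{m×m}` be normal with (complex) eigenvalues `λ_1, …, λ_m`, all having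
positive real part, and let `Σ_t = (A+Aᵀ)⁻¹ (I − e^{-t(A+Aᵀ)})`, `Σ_∞ = (A+Aᵀ)⁻¹`.
If `Q` is the positive semidefinite square root of `Σ_∞` and `R` the positive
semidefinite square root of `Q Σ_t Q`, then for `t > 0`,
`Tr(Σ_t + Σ_∞ − 2 R) = ∑_j (1/(2 Re λ_j)) e^{-4t Re λ_j} / (√(1 − e^{-2t Re λ_j}) + 1)²`. -/
theorem stmt_8 {m : ℕ} (A : Matrix (Fin m) (Fin m) ℝ) (lam : Fin m → ℂ) (t : ℝ)
    (ht : 0 < t)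
    (hnormal : A * Aᵀ = Aᵀ * A)
    (hchar : (A.map (Complex.ofReal ·)).charpoly = ∏ j, (X - C (lam j)))
    (hpos : ∀ j, 0 < (lam j).re)
    (Q R : Matrix (Fin m) (Fin m) ℝ)
    (hQ : Q.PosSemidef) (hQ2 : Q * Q = (A + Aᵀ)⁻¹)
    (hR : R.PosSemidef)
    (hR2 : R * R = Q * ((A + Aᵀ)⁻¹ * (1 - NormedSpace.exp (-(t • (A + Aᵀ))))) * Q) :
    ((A + Aᵀ)⁻¹ * (1 - NormedSpace.exp (-(t • (A + Aᵀ)))) + (A + Aᵀ)⁻¹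
        - (2 : ℝ) • R).trace =
      ∑ j, (1 / (2 * (lam j).re)) *
        (Real.exp (-(4 * t * (lam j).re)) /
          (Real.sqrt (1 - Real.exp (-(2 * t * (lam j).re))) + 1) ^ 2) := by
  classical
  set S := A + Aᵀ with hSdef
  have hS : S.IsHermitian := by
    rw [Matrix.IsHermitian, hSdef, conjTranspose_add, conjTranspose_eq_transpose_of_trivial,
      conjTranspose_eq_transpose_of_trivial, transpose_transpose, add_comm]
  set ev : Fin m → ℝ := hS.eigenvalues with hev
  set V : Matrix (Fin m) (Fin m) ℝ := (hS.eigenvectorUnitary : Matrix (Fin m) (Fin m) ℝ) with hVdef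
  have hV1 : V * star V = 1 := mem_unitaryGroup_iff.mp hS.eigenvectorUnitary.2
  have hV2 : star V * V = 1 := mem_unitaryGroup_iff'.mp hS.eigenvectorUnitary.2
  -- abbreviation for conjugated diagonal matrices
  set K : (Fin m → ℝ) → Matrix (Fin m) (Fin m) ℝ :=
    fun f => V * diagonal f * star V with hK
  have hKmul : ∀ f g : Fin m → ℝ, K f * K g = K (fun j => f j * g j) := by
    intro f g
    simp only [hK, Matrix.mul_assoc]
    rw [← Matrix.mul_assoc (star V) V, hV2, one_mul, ← Matrix.mul_assoc (diagonal f),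
      diagonal_mul_diagonal]
  have hKadd : ∀ f g : Fin m → ℝ, K f + K g = K (fun j => f j + g j) := by
    intro f g
    show V * diagonal f * star V + V * diagonal g * star V
      = V * diagonal (fun j => f j + g j) * star V
    rw [← Matrix.add_mul, ← Matrix.mul_add, diagonal_add]
  have hKsub : ∀ f g : Fin m → ℝ, K f - K g = K (fun j => f j - g j) := by
    intro f g
    show V * diagonal f * star V - V * diagonal g * star V
      = V * diagonal (fun j => f j - g j) * star V
    rw [← Matrix.sub_mul, ← Matrix.mul_sub]
    congr 2
    ext i j
    by_cases h : i = j
    · subst h; simp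
    · simp [diagonal_apply, h]
  have hKone : K (fun _ => 1) = 1 := by
    simp only [hK]
    rw [show (diagonal fun _ : Fin m => (1:ℝ)) = 1 from diagonal_one, mul_one, hV1]
  have hKsmul : ∀ (c : ℝ) (f : Fin m → ℝ), c • K f = K (fun j => c * f j) := by
    intro c f
    show c • (V * diagonal f * star V) = V * diagonal (fun j => c * f j) * star V
    rw [show (fun j => c * f j) = c • f from rfl, diagonal_smul, Matrix.mul_smul,
      Matrix.smul_mul]
  have hKtrace : ∀ f : Fin m → ℝ, (K f).trace = ∑ j, f j := by
    intro f
    rw [hK, trace_mul_cycle, hV2, one_mul, trace_diagonal]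
  have hSK : S = K ev := by
    have := hS.spectral_theorem
    simpa [hK] using this
  -- eigenvalue identification
  have hVunit : IsUnit V := ⟨⟨V, star V, hV1, hV2⟩, rfl⟩
  set B : Matrix (Fin m) (Fin m) ℂ := A.map (Complex.ofReal ·) with hB
  have hconjB : Bᴴ = Aᵀ.map (Complex.ofReal ·) := by
    ext i j
    simp [hB, conjTranspose_apply, Complex.conj_ofReal]
  have hmapmul : ∀ (M N : Matrix (Fin m) (Fin m) ℝ),
      (M * N).map (Complex.ofReal ·) = M.map (Complex.ofReal ·) * N.map (Complex.ofReal ·) := by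
    intro M N
    ext i j
    simp [Matrix.mul_apply]
  have hBn : B * Bᴴ = Bᴴ * B := by
    rw [hconjB, hB, ← hmapmul, ← hmapmul, hnormal]
  obtain ⟨d, hd1, hd2⟩ := normal_charpoly_exists B hBn
  have hdlam : Multiset.map d Finset.univ.val = Multiset.map lam Finset.univ.val :=
    multiset_of_finset_prod (hd1.symm.trans hchar)
  have hScharR : S.charpoly = ∏ j, (X - C (ev j)) := by
    rw [hSK]
    show (V * diagonal ev * star V).charpoly = _
    rw [charpoly_conj_of hV1, charpoly_diagonal']
  have hSmap : S.map (Complex.ofReal ·) = B + Bᴴ := by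
    rw [hSdef, hconjB, hB]
    ext i j
    simp [Matrix.add_apply]
  have hSchar2 : (∏ j, (X - C ((ev j : ℂ)))) = ∏ j, (X - C ((2 * (d j).re : ℝ) : ℂ)) := by
    have h1 : (S.map (Complex.ofReal ·)).charpoly = (S.charpoly).map Complex.ofRealHom := by
      have he : S.map (Complex.ofReal ·) = S.map Complex.ofRealHom := by
        ext i j; simp
      rw [he, Matrix.charpoly_map]
    calc (∏ j, (X - C ((ev j : ℂ))))
        = ∏ j, Polynomial.map Complex.ofRealHom (X - C (ev j)) :=
          Finset.prod_congr rfl fun j _ => by simp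
      _ = ∏ j, (X - C ((2 * (d j).re : ℝ) : ℂ)) := by
          rw [← Polynomial.map_prod, ← hScharR, ← h1, hSmap, hd2]
  have hevmult : Multiset.map ev Finset.univ.val =
      Multiset.map (fun j => 2 * (lam j).re) Finset.univ.val := by
    have h1 : Multiset.map (fun j => ((ev j : ℂ))) Finset.univ.val =
        Multiset.map (fun j => ((2 * (d j).re : ℝ) : ℂ)) Finset.univ.val :=
      multiset_of_finset_prod hSchar2
    have h2 : Multiset.map (fun x : ℝ => (x : ℂ)) (Multiset.map ev Finset.univ.val)
        = Multiset.map (fun x : ℝ => (x : ℂ))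
          (Multiset.map (fun j => 2 * (d j).re) Finset.univ.val) := by
      rw [Multiset.map_map, Multiset.map_map]
      exact h1
    have h3 := Multiset.map_injective (f := fun x : ℝ => (x : ℂ))
      (fun a b hab => Complex.ofReal_injective hab) h2
    rw [h3]
    have h4 := congrArg (Multiset.map (fun z : ℂ => 2 * z.re)) hdlam
    rw [Multiset.map_map, Multiset.map_map] at h4
    exact h4
  have hevpos : ∀ j, 0 < ev j := by
    intro j
    have hmem : ev j ∈ Multiset.map ev Finset.univ.val :=
      Multiset.mem_map_of_mem ev (Finset.mem_univ j)
    rw [hevmult] at hmem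
    obtain ⟨i, _, hi⟩ := Multiset.mem_map.mp hmem
    rw [← hi]
    have := hpos i
    linarith
  -- matrix computations
  set s : Fin m → ℝ := fun j => Real.exp (-(t * ev j)) with hs
  have hs0 : ∀ j, 0 < s j := fun j => Real.exp_pos _
  have hs1 : ∀ j, s j < 1 := by
    intro j
    rw [hs]
    calc Real.exp (-(t * ev j)) < Real.exp 0 :=
      Real.exp_lt_exp.mpr (by nlinarith [hevpos j, ht])
    _ = 1 := Real.exp_zero
  have hSinv : S⁻¹ = K (fun j => (ev j)⁻¹) := by
    apply Matrix.inv_eq_left_inv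
    rw [hSK, hKmul]
    rw [show (fun j => (ev j)⁻¹ * ev j) = fun _ => (1:ℝ) by
      funext j; exact inv_mul_cancel₀ (hevpos j).ne']
    exact hKone
  have hVinv : V⁻¹ = star V := Matrix.inv_eq_left_inv hV2
  have hexp : NormedSpace.exp (-(t • S)) = K s := by
    have h1 : -(t • S) = K (fun j => -(t * ev j)) := by
      rw [hSK, show (fun j => -(t * ev j)) = fun j => (-t) * ev j from funext fun j => by ring,
        ← hKsmul, neg_smul]
    rw [h1, hK, ← hVinv, Matrix.exp_conj V _ hVunit, Matrix.exp_diagonal,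
      Pi.exp_def]
    congr 2
    funext j
    rw [← Real.exp_eq_exp_ℝ]
  have hinner : S⁻¹ * (1 - NormedSpace.exp (-(t • S)))
      = K (fun j => (ev j)⁻¹ * (1 - s j)) := by
    rw [hexp, ← hKone, hKsub, hSinv, hKmul]
  have hQid : Q = K (fun j => (Real.sqrt (ev j))⁻¹) := by
    have hcand : Matrix.PosSemidef (K (fun j => (Real.sqrt (ev j))⁻¹)) := by
      have hdg : Matrix.PosSemidef (diagonal (fun j => (Real.sqrt (ev j))⁻¹)) :=
        Matrix.posSemidef_diagonal_iff.mpr fun j => by positivity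
      have := hdg.mul_mul_conjTranspose_same V
      simpa [hK, Matrix.star_eq_conjTranspose] using this
    refine psd_eq_of_sq_eq_sq hQ hcand ?_
    rw [pow_two, pow_two, hQ2, hSinv, hKmul]
    refine congrArg K (funext fun j => ?_)
    show (ev j)⁻¹ = (Real.sqrt (ev j))⁻¹ * (Real.sqrt (ev j))⁻¹
    rw [← mul_inv, Real.mul_self_sqrt (hevpos j).le]
  have hRid : R = K (fun j => Real.sqrt (1 - s j) * (ev j)⁻¹) := by
    have hcand : Matrix.PosSemidef (K (fun j => Real.sqrt (1 - s j) * (ev j)⁻¹)) := by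
      have hdg : Matrix.PosSemidef (diagonal (fun j => Real.sqrt (1 - s j) * (ev j)⁻¹)) :=
        Matrix.posSemidef_diagonal_iff.mpr fun j =>
          mul_nonneg (Real.sqrt_nonneg _) (inv_nonneg.mpr (hevpos j).le)
      have := hdg.mul_mul_conjTranspose_same V
      simpa [hK, Matrix.star_eq_conjTranspose] using this
    refine psd_eq_of_sq_eq_sq hR hcand ?_
    rw [pow_two, pow_two, hR2, hQid, hinner, hKmul, hKmul, hKmul]
    refine congrArg K (funext fun j => ?_)
    have h1 : Real.sqrt (1 - s j) * Real.sqrt (1 - s j) = 1 - s j :=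
      Real.mul_self_sqrt (by linarith [hs1 j])
    have h2 : (Real.sqrt (ev j))⁻¹ * (Real.sqrt (ev j))⁻¹ = (ev j)⁻¹ := by
      rw [← mul_inv, Real.mul_self_sqrt (hevpos j).le]
    show (Real.sqrt (ev j))⁻¹ * ((ev j)⁻¹ * (1 - s j)) * (Real.sqrt (ev j))⁻¹
        = Real.sqrt (1 - s j) * (ev j)⁻¹ * (Real.sqrt (1 - s j) * (ev j)⁻¹)
    calc (Real.sqrt (ev j))⁻¹ * ((ev j)⁻¹ * (1 - s j)) * (Real.sqrt (ev j))⁻¹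
        = ((Real.sqrt (ev j))⁻¹ * (Real.sqrt (ev j))⁻¹) * ((ev j)⁻¹ * (1 - s j)) := by ring
      _ = (1 - s j) * ((ev j)⁻¹ * (ev j)⁻¹) := by rw [h2]; ring
      _ = (Real.sqrt (1 - s j) * Real.sqrt (1 - s j)) * ((ev j)⁻¹ * (ev j)⁻¹) := by rw [h1]
      _ = Real.sqrt (1 - s j) * (ev j)⁻¹ * (Real.sqrt (1 - s j) * (ev j)⁻¹) := by ring
  -- final assembly
  have hfinal : (S⁻¹ * (1 - NormedSpace.exp (-(t • S))) + S⁻¹ - (2:ℝ) • R).trace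
      = ∑ j, ((ev j)⁻¹ * (1 - s j) + (ev j)⁻¹ - 2 * (Real.sqrt (1 - s j) * (ev j)⁻¹)) := by
    rw [hinner, hSinv, hRid, hKsmul, hKadd, hKsub, hKtrace]
  rw [hfinal]
  -- transfer sum along eigenvalue multiset equality
  set F : ℝ → ℝ := fun x => x⁻¹ * (1 - Real.exp (-(t * x))) + x⁻¹
      - 2 * (Real.sqrt (1 - Real.exp (-(t * x))) * x⁻¹) with hF
  have hFev : ∀ j, (ev j)⁻¹ * (1 - s j) + (ev j)⁻¹ - 2 * (Real.sqrt (1 - s j) * (ev j)⁻¹)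
      = F (ev j) := by
    intro j
    rw [hF, hs]
  have hsum : ∑ j, F (ev j) = ∑ j, F (2 * (lam j).re) := by
    rw [Finset.sum_eq_multiset_sum, Finset.sum_eq_multiset_sum]
    rw [show Multiset.map (fun j => F (ev j)) Finset.univ.val
      = Multiset.map F (Multiset.map ev Finset.univ.val) by rw [Multiset.map_map]; rfl]
    rw [show Multiset.map (fun j => F (2 * (lam j).re)) Finset.univ.val
      = Multiset.map F (Multiset.map (fun j => 2 * (lam j).re) Finset.univ.val) by
        rw [Multiset.map_map]; rfl]
    rw [hevmult]
  have hptwise : ∀ j : Fin m, F (2 * (lam j).re) =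
      (1 / (2 * (lam j).re)) * (Real.exp (-(4 * t * (lam j).re)) /
        (Real.sqrt (1 - Real.exp (-(2 * t * (lam j).re))) + 1) ^ 2) := by
    intro j
    set μ : ℝ := 2 * (lam j).re with hμ
    have hμpos : 0 < μ := by have := hpos j; rw [hμ]; linarith
    set σ : ℝ := Real.exp (-(t * μ)) with hσ
    have hσ0 : 0 < σ := Real.exp_pos _
    have hσ1 : σ < 1 := by
      calc σ < Real.exp 0 := Real.exp_lt_exp.mpr (by nlinarith)
      _ = 1 := Real.exp_zero
    have h1 : F μ = (1 - σ) * μ⁻¹ + μ⁻¹ - 2 * (Real.sqrt (1 - σ) * μ⁻¹) := by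
      rw [hF, hσ]; ring_nf
    rw [h1, scalar_id hσ0 hσ1]
    have e1 : Real.exp (-(4 * t * (lam j).re)) = σ ^ 2 := by
      rw [hσ, ← Real.exp_nat_mul]
      congr 1
      push_cast
      rw [hμ]; ring
    have e2 : Real.exp (-(2 * t * (lam j).re)) = σ := by
      rw [hσ]
      congr 1
      rw [hμ]; ring
    rw [e1, e2]
  calc ∑ j, ((ev j)⁻¹ * (1 - s j) + (ev j)⁻¹ - 2 * (Real.sqrt (1 - s j) * (ev j)⁻¹))
      = ∑ j, F (ev j) := Finset.sum_congr rfl fun j _ => hFev j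
    _ = ∑ j, F (2 * (lam j).re) := hsum
    _ = _ := Finset.sum_congr rfl fun j _ => hptwise j
end

section
/- For random vectors X in ℝ^m with E[|X|^p] < ∞, p ≥ 1, and any deterministic x ∈ ℝ^m, the Wasserstein distance of order p satisfies the shift linearity W_p(x + X, X) = |x|. -/
open MeasureTheory

/-- The Wasserstein–Kantorovich–Rubinstein distance of order `p > 0` (with outer
exponent `min {1, 1/p}`), as an infimum over couplings. -/
noncomputable def wassersteinDist {E : Type*} [NormedAddCommGroup E] [MeasurableSpace E]
    (p : ℝ) (μ ν : Measure E) : ℝ :=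
  sInf {r : ℝ | ∃ T : Measure (E × E), T.map Prod.fst = μ ∧ T.map Prod.snd = ν ∧
    r = (∫ z, ‖z.1 - z.2‖ ^ p ∂T) ^ min 1 p⁻¹}

/-- Shift linearity: for `p ≥ 1`, a random vector `X` in `ℝ^m` with `E[|X|^p] < ∞` and
a deterministic `x ∈ ℝ^m`, `W_p(x + X, X) = |x|`. -/
theorem stmt_11 {m : ℕ} {Ω : Type*} [MeasurableSpace Ω] (P : Measure Ω)
    [IsProbabilityMeasure P] (p : ℝ) (hp : 1 ≤ p)
    (X : Ω → EuclideanSpace ℝ (Fin m)) (hX : AEMeasurable X P)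
    (hmom : ∫⁻ ω, (‖X ω‖₊ : ENNReal) ^ p ∂P ≠ ⊤)
    (x : EuclideanSpace ℝ (Fin m)) :
    wassersteinDist p (P.map (fun ω => x + X ω)) (P.map X) = ‖x‖ := by
  classical
  have hp0 : (0:ℝ) < p := lt_of_lt_of_le one_pos hp
  have hmin : min 1 p⁻¹ = p⁻¹ := min_eq_right (by
    rw [inv_le_one_iff₀]; right; exact hp)
  set pe : ENNReal := ENNReal.ofReal p with hpe
  have hpe0 : pe ≠ 0 := by simp [hpe, ENNReal.ofReal_eq_zero, not_le, hp0]
  have hpet : pe ≠ ⊤ := ENNReal.ofReal_ne_top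
  have hpetr : pe.toReal = p := ENNReal.toReal_ofReal hp0.le
  have hpe1 : (1:ENNReal) ≤ pe := by
    rw [hpe, ← ENNReal.ofReal_one]; exact ENNReal.ofReal_le_ofReal hp
  have hY : AEMeasurable (fun ω => x + X ω) P := hX.const_add x
  have hXp : MemLp X pe P := by
    refine ⟨hX.aestronglyMeasurable, ?_⟩
    rw [eLpNorm_eq_lintegral_rpow_enorm_toReal hpe0 hpet, hpetr]
    exact ENNReal.rpow_lt_top_of_nonneg (by positivity) (by simpa only [enorm_eq_nnnorm] using hmom)
  have hYp : MemLp (fun ω => x + X ω) pe P := (memLp_const x).add hXp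
  have hXint : Integrable X P := memLp_one_iff_integrable.mp
    (hXp.mono_exponent hpe1)
  -- continuity of the integrand
  have hcont : Continuous (fun z : EuclideanSpace ℝ (Fin m) × EuclideanSpace ℝ (Fin m) => ‖z.1 - z.2‖ ^ p) :=
    (Real.continuous_rpow_const hp0.le).comp ((continuous_fst.sub continuous_snd).norm)
  haveI : IsProbabilityMeasure (P.map (fun ω => x + X ω)) :=
    Measure.isProbabilityMeasure_map hY
  haveI : IsProbabilityMeasure (P.map X) := Measure.isProbabilityMeasure_map hX
  -- the natural coupling witnesses membership of ‖x‖ in the set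
  have hmem : ‖x‖ ∈ {r : ℝ | ∃ T : Measure (EuclideanSpace ℝ (Fin m) × EuclideanSpace ℝ (Fin m)),
      T.map Prod.fst = P.map (fun ω => x + X ω) ∧ T.map Prod.snd = P.map X ∧
      r = (∫ z, ‖z.1 - z.2‖ ^ p ∂T) ^ min 1 p⁻¹} := by
    refine ⟨P.map (fun ω => (x + X ω, X ω)), ?_, ?_, ?_⟩
    · rw [AEMeasurable.map_map_of_aemeasurable measurable_fst.aemeasurable (hY.prodMk hX)]
      rfl
    · rw [AEMeasurable.map_map_of_aemeasurable measurable_snd.aemeasurable (hY.prodMk hX)]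
      rfl
    · rw [integral_map (hY.prodMk hX) hcont.aestronglyMeasurable]
      simp only [add_sub_cancel_right]
      rw [integral_const, probReal_univ, one_smul, hmin,
        ← Real.rpow_mul (norm_nonneg x), mul_inv_cancel₀ hp0.ne', Real.rpow_one]
  -- every element of the set is at least ‖x‖
  have hlb : ∀ r ∈ {r : ℝ | ∃ T : Measure (EuclideanSpace ℝ (Fin m) × EuclideanSpace ℝ (Fin m)),
      T.map Prod.fst = P.map (fun ω => x + X ω) ∧ T.map Prod.snd = P.map X ∧
      r = (∫ z, ‖z.1 - z.2‖ ^ p ∂T) ^ min 1 p⁻¹}, ‖x‖ ≤ r := by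
    rintro r ⟨T, hT1, hT2, rfl⟩
    haveI : IsProbabilityMeasure T := by
      constructor
      have : (T.map Prod.fst) Set.univ = 1 := by rw [hT1]; exact measure_univ
      rwa [Measure.map_apply measurable_fst MeasurableSet.univ, Set.preimage_univ] at this
    have h1 : MemLp (fun z : EuclideanSpace ℝ (Fin m) × EuclideanSpace ℝ (Fin m) => z.1) pe T := by
      have h : MemLp id pe (T.map Prod.fst) := by
        rw [hT1, memLp_map_measure_iff aestronglyMeasurable_id hY]
        exact hYp
      exact (memLp_map_measure_iff aestronglyMeasurable_id measurable_fst.aemeasurable).mp h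
    have h2 : MemLp (fun z : EuclideanSpace ℝ (Fin m) × EuclideanSpace ℝ (Fin m) => z.2) pe T := by
      have h : MemLp id pe (T.map Prod.snd) := by
        rw [hT2, memLp_map_measure_iff aestronglyMeasurable_id hX]
        exact hXp
      exact (memLp_map_measure_iff aestronglyMeasurable_id measurable_snd.aemeasurable).mp h
    have hg : MemLp (fun z : EuclideanSpace ℝ (Fin m) × EuclideanSpace ℝ (Fin m) => z.1 - z.2) pe T := h1.sub h2
    have hg1 : MemLp (fun z : EuclideanSpace ℝ (Fin m) × EuclideanSpace ℝ (Fin m) => z.1 - z.2) 1 T := hg.mono_exponent hpe1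
    -- the mean of the coupling difference is x
    have hmean : (∫ z, (z.1 - z.2) ∂T) = x := by
      rw [integral_sub (memLp_one_iff_integrable.mp (h1.mono_exponent hpe1))
        (memLp_one_iff_integrable.mp (h2.mono_exponent hpe1))]
      have e1 : (∫ z : EuclideanSpace ℝ (Fin m) × EuclideanSpace ℝ (Fin m), z.1 ∂T) = x + ∫ ω, X ω ∂P := by
        have : (∫ z : EuclideanSpace ℝ (Fin m) × EuclideanSpace ℝ (Fin m), z.1 ∂T) = ∫ y, id y ∂(T.map Prod.fst) := by
          rw [integral_map measurable_fst.aemeasurable aestronglyMeasurable_id]; rfl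
        rw [this, hT1, integral_map hY aestronglyMeasurable_id]
        simp only [id]
        rw [integral_add (integrable_const x) hXint, integral_const, probReal_univ,
          one_smul]
      have e2 : (∫ z : EuclideanSpace ℝ (Fin m) × EuclideanSpace ℝ (Fin m), z.2 ∂T) = ∫ ω, X ω ∂P := by
        have : (∫ z : EuclideanSpace ℝ (Fin m) × EuclideanSpace ℝ (Fin m), z.2 ∂T) = ∫ y, id y ∂(T.map Prod.snd) := by
          rw [integral_map measurable_snd.aemeasurable aestronglyMeasurable_id]; rfl
        rw [this, hT2, integral_map hX aestronglyMeasurable_id]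
        rfl
      rw [e1, e2, add_sub_cancel_right]
    have step1 : ‖x‖ ≤ ∫ z, ‖z.1 - z.2‖ ∂T := by
      calc ‖x‖ = ‖∫ z, (z.1 - z.2) ∂T‖ := by rw [hmean]
        _ ≤ ∫ z, ‖z.1 - z.2‖ ∂T := norm_integral_le_integral_norm _
    have step2 : (∫ z, ‖z.1 - z.2‖ ∂T) ≤ (∫ z, ‖z.1 - z.2‖ ^ p ∂T) ^ p⁻¹ := by
      have hle := eLpNorm_le_eLpNorm_of_exponent_le hpe1 hg.aestronglyMeasurable (μ := T)
      rw [hg1.eLpNorm_eq_integral_rpow_norm one_ne_zero ENNReal.one_ne_top,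
        hg.eLpNorm_eq_integral_rpow_norm hpe0 hpet, hpetr] at hle
      simp only [ENNReal.toReal_one, Real.rpow_one, inv_one] at hle
      rw [ENNReal.ofReal_le_ofReal_iff (by positivity)] at hle
      exact hle
    rw [hmin]
    exact le_trans (le_trans step1 step2) (le_of_eq rfl)
  rw [wassersteinDist]
  exact le_antisymm (csInf_le ⟨‖x‖, hlb⟩ hmem) (le_csInf ⟨‖x‖, hmem⟩ hlb)
end
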